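/- Let L be the product lattice [1] × [1] and let W be the binary relation on L consisting of all identity pairs together with the single pair ((0,0),(0,1)). Then there exists a model structure on L with weak equivalences W whose acyclic fibrations F ∩ W equal W (namely one in which every pair x ≤ y is a fibration), but there is no model structure on L with weak equivalences W whose acyclic fibrations F ∩ W consist only of identity pairs. -/

import Mathlib

/-- The five-element nonmodular lattice `N₅` with `0 < A < C < 1`, `0 < B < 1`,
and `B` incomparable to `A` and `C`. -/
inductive N5 : Type
  | zero | A | B | C | one
  deriving DecidableEq

instance : Fintype N5 :=
  ⟨⟨↑[N5.zero, N5.A, N5.B, N5.C, N5.one], by decide⟩, fun x => by cases x <;> decide⟩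

namespace N5

def leBool : N5 → N5 → Bool
  | zero, _ => true
  | _, one => true
  | A, A => true
  | A, C => true
  | B, B => true
  | C, C => true
  | _, _ => false

instance : LE N5 := ⟨fun x y => leBool x y = true⟩

instance : DecidableRel ((· ≤ ·) : N5 → N5 → Prop) :=
  fun x y => inferInstanceAs (Decidable (leBool x y = true))

def supFn (x y : N5) : N5 := if leBool x y then y else if leBool y x then x else one
def infFn (x y : N5) : N5 := if leBool x y then x else if leBool y x then y else zero

instance : Lattice N5 where
  le := (· ≤ ·)
  le_refl := by decide
  le_trans := by decide
  le_antisymm := by decide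
  sup := supFn
  le_sup_left := by decide
  le_sup_right := by decide
  sup_le := by decide
  inf := infFn
  inf_le_left := by decide
  inf_le_right := by decide
  le_inf := by decide

end N5

section Defs

variable {L : Type*} [Lattice L]

/-- `llp S a b`: `a ≤ b` and `(a, b)` has the left lifting property with respect to
every pair in `S`. -/
def llp (S : L → L → Prop) (a b : L) : Prop :=
  a ≤ b ∧ ∀ x y, S x y → a ≤ x → b ≤ y → b ≤ x

/-- `rlp S x y`: `x ≤ y` and every pair in `S` has the left lifting property with
respect to `(x, y)`. -/
def rlp (S : L → L → Prop) (x y : L) : Prop :=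
  x ≤ y ∧ ∀ a b, S a b → a ≤ x → b ≤ y → b ≤ x

/-- A transfer system: a reflexive transitive subrelation of `≤` closed under pullbacks. -/
structure IsTransferSystem (T : L → L → Prop) : Prop where
  subLE : ∀ x y, T x y → x ≤ y
  refl : ∀ x, T x x
  trans : ∀ x y z, T x y → T y z → T x z
  pullback : ∀ x y z, T x y → z ≤ y → T (x ⊓ z) z

/-- A cotransfer system: a reflexive transitive subrelation of `≤` closed under pushouts. -/
structure IsCotransferSystem (K : L → L → Prop) : Prop where
  subLE : ∀ x y, K x y → x ≤ y
  refl : ∀ x, K x x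
  trans : ∀ x y z, K x y → K y z → K x z
  pushout : ∀ x y z, K x y → x ≤ z → K z (y ⊔ z)

/-- A wide decomposable subcategory of a lattice. -/
structure IsWideDecomposable (W : L → L → Prop) : Prop where
  subLE : ∀ x y, W x y → x ≤ y
  refl : ∀ x, W x x
  trans : ∀ x y z, W x y → W y z → W x z
  decomp : ∀ x y z, W x z → x ≤ y → y ≤ z → W x y ∧ W y z

/-- A model structure on a lattice, given by weak equivalences `W`, cofibrations `C`
and fibrations `F`. -/
structure IsModelStructure (W C F : L → L → Prop) : Prop where
  W_subLE : ∀ x y, W x y → x ≤ y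
  W_refl : ∀ x, W x x
  C_subLE : ∀ x y, C x y → x ≤ y
  C_refl : ∀ x, C x x
  F_subLE : ∀ x y, F x y → x ≤ y
  F_refl : ∀ x, F x x
  two_three_comp : ∀ x y z, x ≤ y → y ≤ z → W x y → W y z → W x z
  two_three_right : ∀ x y z, x ≤ y → y ≤ z → W x y → W x z → W y z
  two_three_left : ∀ x y z, x ≤ y → y ≤ z → W y z → W x z → W x y
  lift_AC : ∀ x y, (C x y ∧ W x y) ↔ llp F x y
  lift_C : ∀ x y, C x y ↔ llp (fun a b => F a b ∧ W a b) x y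
  lift_F : ∀ x y, F x y ↔ rlp (fun a b => C a b ∧ W a b) x y
  lift_AF : ∀ x y, (F x y ∧ W x y) ↔ rlp C x y
  fact_C_AF : ∀ x y, x ≤ y → ∃ z, x ≤ z ∧ z ≤ y ∧ C x z ∧ F z y ∧ W z y
  fact_AC_F : ∀ x y, x ≤ y → ∃ z, x ≤ z ∧ z ≤ y ∧ C x z ∧ W x z ∧ F z y

/-- The smallest transfer system containing `S`: the intersection of all transfer
systems containing `S`. -/
def genTS (S : L → L → Prop) (x y : L) : Prop :=
  ∀ T : L → L → Prop, IsTransferSystem T → (∀ a b, S a b → T a b) → T x y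

end Defs

/-- A bundled model structure on a lattice. -/
structure ModelStructure (L : Type*) [Lattice L] where
  W : L → L → Prop
  C : L → L → Prop
  F : L → L → Prop
  isModel : IsModelStructure W C F

/-- `M'` is a left Bousfield localization of `M`: same cofibrations, more weak equivalences. -/
def IsLeftBousfieldLoc {L : Type*} [Lattice L] (M M' : ModelStructure L) : Prop :=
  M'.C = M.C ∧ ∀ x y, M.W x y → M'.W x y

/-- `M'` is a right Bousfield localization of `M`: same fibrations, more weak equivalences. -/
def IsRightBousfieldLoc {L : Type*} [Lattice L] (M M' : ModelStructure L) : Prop :=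
  M'.F = M.F ∧ ∀ x y, M.W x y → M'.W x y


/-- The relation on `[1] × [1]` consisting of identities together with the single
pair `((0,0),(0,1))`. -/
def W14 : Bool × Bool → Bool × Bool → Prop :=
  fun p q => p = q ∨ (p = (false, false) ∧ q = (false, true))

/-- Fibrations for the existence part: everything. -/
def F0 : Bool × Bool → Bool × Bool → Prop := fun p q => p ≤ q

/-- Cofibrations for the existence part. -/
def C0 : Bool × Bool → Bool × Bool → Prop :=
  fun p q => p ≤ q ∧ ¬(p = (false, false) ∧ q = (false, true))

set_option synthInstance.maxSize 4000
set_option synthInstance.maxHeartbeats 2000000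
set_option maxHeartbeats 4000000

theorem isModel0 : IsModelStructure W14 C0 F0 := by
  constructor <;> (simp only [W14, C0, F0, llp, rlp]; decide)

/-- There is a model structure on `[1] × [1]` with weak equivalences `W14`
whose acyclic fibrations equal `W14` (every pair `x ≤ y` being a fibration), but none
whose acyclic fibrations are only the identity pairs. -/
theorem W14_acyclic_fibrations_forced :
    (∃ C F : Bool × Bool → Bool × Bool → Prop,
      IsModelStructure W14 C F ∧ (∀ x y, x ≤ y → F x y) ∧
      (fun x y => F x y ∧ W14 x y) = W14) ∧
    ¬ ∃ C F : Bool × Bool → Bool × Bool → Prop,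
      IsModelStructure W14 C F ∧
      (fun x y => F x y ∧ W14 x y) = (fun x y => x = y) := by
  constructor
  · refine ⟨C0, F0, isModel0, fun x y h => h, ?_⟩
    have key : ∀ x y, (F0 x y ∧ W14 x y) ↔ W14 x y := by
      simp only [W14, F0]; decide
    funext x y
    exact propext (key x y)
  · rintro ⟨C, F, hM, hAF⟩
    have hAF' : ∀ x y : Bool × Bool, F x y → W14 x y → x = y := by
      intro x y h1 h2
      exact congrFun (congrFun hAF x) y ▸ ⟨h1, h2⟩
    -- F (true,false) (true,true)
    obtain ⟨z, _, hzy, _, hW, hF⟩ :=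
      hM.fact_AC_F (true, false) (true, true) (by decide)
    have hz : z = (true, false) := by
      rcases hW with h | ⟨h, _⟩
      · exact h.symm
      · exact absurd h (by decide)
    subst hz
    -- AC (false,false) (false,true)
    obtain ⟨w, _, hwy, hC, hWw, hFw⟩ :=
      hM.fact_AC_F (false, false) (false, true) (by decide)
    have hw : w = (false, true) := by
      by_contra hne
      have : w = (false, false) := by
        rcases hWw with h | ⟨h, h'⟩
        · exact h.symm
        · exact absurd h' hne
      subst this
      have := hAF' _ _ hFw (Or.inr ⟨rfl, rfl⟩)
      exact absurd this (by decide)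
    subst hw
    have hllp := (hM.lift_AC (false, false) (false, true)).mp ⟨hC, hWw⟩
    have := hllp.2 (true, false) (true, true) hF (by decide) (by decide)
    exact absurd this (by decide)
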